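/- arXiv:2309.04020 — 2 statements merged into one kernel-verified Lean document; each statement's English description precedes it below -/
import Mathlib

section
/- Fix a constraint C and an implementable local compromiser assignment α for C. If α is consistent (both forward consistent and backward consistent), then the local priority mechanism LP_α is group strategy-proof. -/
/- Common framework: constrained allocation, local priority mechanisms
   (Root & Ahn, "Local Priority Mechanisms"). Agents `N`, objects `O`.
   A strict preference is encoded as a `LinearOrder` on `O`, where
   `pi.lt b a` means `a` is strictly preferred to `b`. -/

open Classical

noncomputable section

variable {N O : Type}

/-- `a` is strictly preferred to `b` under `pi`. -/
def sPref (pi : LinearOrder O) (a b : O) : Prop := pi.lt b a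

/-- `a` is weakly preferred to `b` under `pi`. -/
def wPref (pi : LinearOrder O) (a b : O) : Prop := a = b ∨ pi.lt b a

/-- The favourite (top-ranked) object under `pi`. -/
def topObj [Fintype O] [Nonempty O] (pi : LinearOrder O) : O :=
  @Finset.max' O pi Finset.univ Finset.univ_nonempty

/-- `tau1 p` is the allocation assigning each agent her favourite object. -/
def tau1 [Fintype O] [Nonempty O] (p : N → LinearOrder O) : N → O :=
  fun i => topObj (p i)

/-- The strict lower contour set of `a` under `pi`, as a finset. -/
def LCfin [Fintype O] (pi : LinearOrder O) (a : O) : Finset O :=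
  Finset.univ.filter fun b => pi.lt b a

/-- The best element of the strict lower contour set of `a` (junk value `a` if empty). -/
def bestLC [Fintype O] (pi : LinearOrder O) (a : O) : O :=
  if h : (LCfin pi a).Nonempty then @Finset.max' O pi _ h else a

/-- At `x`, no local compromiser has an empty strict lower contour set. -/
def lpNoFail [Fintype O] (α : (N → O) → Set N) (p : N → LinearOrder O) (x : N → O) : Prop :=
  ∀ i ∈ α x, (LCfin (p i) (x i)).Nonempty

/-- One step of the local priority algorithm: all local compromisers move to their
next-favourite object, everyone else stays put. -/
def lpStep [Fintype O] (α : (N → O) → Set N) (p : N → LinearOrder O) (x : N → O) : N → O :=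
  fun k => if k ∈ α x then bestLC (p k) (x k) else x k

/-- The local priority algorithm for `α` at profile `p` terminates (without failure)
returning the feasible allocation `y`. -/
def lpRunsTo [Fintype O] [Nonempty O] (C : Set (N → O)) (α : (N → O) → Set N)
    (p : N → LinearOrder O) (y : N → O) : Prop :=
  ∃ (m : ℕ) (x : ℕ → N → O),
    x 0 = tau1 p ∧
    (∀ t < m, x t ∉ C ∧ lpNoFail α p (x t) ∧ x (t + 1) = lpStep α p (x t)) ∧
    x m = y ∧ y ∈ C

/-- `α` is a local compromiser assignment for the constraint `C`. -/
def IsLCA (C : Set (N → O)) (α : (N → O) → Set N) : Prop :=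
  ∀ x, (x ∉ C → (α x).Nonempty) ∧ (x ∈ C → α x = ∅)

/-- `α` is implementable: the local priority algorithm returns a feasible
allocation (never the failure symbol) on every profile. -/
def lpImplementable [Fintype O] [Nonempty O] (C : Set (N → O)) (α : (N → O) → Set N) : Prop :=
  ∀ p : N → LinearOrder O, ∃ y, lpRunsTo C α p y

/-- `α` is an implementable local compromiser assignment for `C` inducing the mechanism `f`,
i.e. `f = LP_α`. -/
def lpInduces [Fintype O] [Nonempty O] (C : Set (N → O)) (α : (N → O) → Set N)
    (f : (N → LinearOrder O) → N → O) : Prop :=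
  IsLCA C α ∧ ∀ p, lpRunsTo C α p (f p)

/-- The local priority mechanism `LP_α` (well defined whenever `α` is implementable,
since the algorithm is deterministic). -/
def LPmech [Fintype O] [Nonempty O] (C : Set (N → O)) (α : (N → O) → Set N)
    (p : N → LinearOrder O) : N → O :=
  if h : ∃ y, lpRunsTo C α p y then h.choose else fun _ => Classical.arbitrary O

/-- Group strategy-proofness. -/
def GSP (f : (N → LinearOrder O) → N → O) : Prop :=
  ∀ (p p' : N → LinearOrder O) (M : Set N), M.Nonempty → (∀ j ∉ M, p' j = p j) →
    ¬ ((∀ j ∈ M, wPref (p j) (f p' j) (f p j)) ∧ ∃ k ∈ M, sPref (p k) (f p' k) (f p k))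

/-- (Individual) strategy-proofness. -/
def StratProof (f : (N → LinearOrder O) → N → O) : Prop :=
  ∀ (p p' : N → LinearOrder O) (i : N), (∀ j, j ≠ i → p' j = p j) →
    ¬ sPref (p i) (f p' i) (f p i)

/-- Nonbossiness. -/
def Nonbossy (f : (N → LinearOrder O) → N → O) : Prop :=
  ∀ (p p' : N → LinearOrder O) (i : N), (∀ j, j ≠ i → p' j = p j) →
    f p' i = f p i → f p' = f p

/-- Maskin monotonicity. -/
def MaskinMono (f : (N → LinearOrder O) → N → O) : Prop :=
  ∀ p p' : N → LinearOrder O,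
    (∀ (i : N) (b : O), (p i).lt b (f p i) → (p' i).lt b (f p i)) → f p' = f p

/-- Unanimity. -/
def Unanimity [Fintype O] [Nonempty O] (C : Set (N → O))
    (f : (N → LinearOrder O) → N → O) : Prop :=
  ∀ p, tau1 p ∈ C → f p = tau1 p

/-- The Fixed compromiser condition. -/
def FixedComp [Fintype O] [Nonempty O] (C : Set (N → O))
    (f : (N → LinearOrder O) → N → O) : Prop :=
  ∀ μ, μ ∉ C → ∃ i : N, ∀ p, tau1 p = μ → f p i ≠ μ i

/-- `pi'` is obtained from `pi` by moving `c` to the bottom of the ranking. -/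
def MoveBottom (pi pi' : LinearOrder O) (c : O) : Prop :=
  (∀ b, b ≠ c → pi'.lt c b) ∧ (∀ a b, a ≠ c → b ≠ c → (pi'.lt a b ↔ pi.lt a b))

/-- Compromiser invariance. -/
def CompInv [Fintype O] [Nonempty O] (C : Set (N → O))
    (f : (N → LinearOrder O) → N → O) : Prop :=
  ∀ μ, μ ∉ C → ∀ p p' : N → LinearOrder O, tau1 p = μ →
    (∀ i, (∀ q, tau1 q = μ → f q i ≠ μ i) → MoveBottom (p i) (p' i) (μ i)) →
    (∀ i, ¬ (∀ q, tau1 q = μ → f q i ≠ μ i) → p' i = p i) →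
    f p' = f p

/-- Pareto efficiency relative to the constraint `C`. -/
def ParetoEff (C : Set (N → O)) (f : (N → LinearOrder O) → N → O) : Prop :=
  ∀ p, ¬ ∃ ν ∈ C, (∀ i, wPref (p i) (ν i) (f p i)) ∧ ∃ k, sPref (p k) (ν k) (f p k)

/-- `diffSet x y = d(x,y)`, the set of agents on which `x` and `y` differ. -/
def diffSet (x y : N → O) : Set N := {i | x i ≠ y i}

/-- Forward consistency. -/
def ForwardCons (α : (N → O) → Set N) : Prop :=
  ∀ x y : N → O, diffSet x y ⊆ α x → α x \ diffSet x y ⊆ α y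

/-- The sequence of allocations `z 0, …, z m` is acyclic. -/
def AcyclicSeq (z : ℕ → N → O) (m : ℕ) : Prop :=
  ∀ (i : N) (r s t : ℕ), r < s → s < t → t ≤ m → z r i = z t i → z s i = z r i

/-- `x` and `y` are `i`-connected under `α`. -/
def IConn (α : (N → O) → Set N) (i : N) (x y : N → O) : Prop :=
  ∃ m : ℕ, 1 ≤ m ∧ ∃ z : ℕ → N → O,
    z 0 = x ∧ z m = y ∧ AcyclicSeq z m ∧ diffSet (z 0) (z 1) = {i} ∧
    ∀ l < m, diffSet (z l) (z (l + 1)) ⊆ α (z l)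

/-- Backward consistency. -/
def BackCons (C : Set (N → O)) (α : (N → O) → Set N) : Prop :=
  ∀ (i : N) (x y : N → O), x ∉ C → y ∉ C → IConn α i x y →
    ∀ x' : N → O, diffSet x x' ⊆ α y → i ∉ diffSet x x' → i ∈ α x'

/-- The pointwise union of all implementable local compromiser assignments inducing `f`. -/
def alphaUnionAll [Fintype O] [Nonempty O] (C : Set (N → O))
    (f : (N → LinearOrder O) → N → O) : (N → O) → Set N :=
  fun x => {i | ∃ β, lpInduces C β f ∧ i ∈ β x}

end

/-!
Group strategy-proofness follows from Maskin monotonicity, which follows from strategy-proofness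
and nonbossiness; together these say that a unilateral deviation which does not hurt the deviator
leaves the outcome of `LP_α` unchanged.

Fix the run `x 0, …, x m = y` of the algorithm at a profile `p`, and order allocations
pointwise by `p`. The heart of the argument is that compromisers are inherited downwards: if
`y ≤ u ≤ x t` and `k ∈ α (x t)` has not moved in `u`, then `k ∈ α u`. This is proved by
downward induction on `t`, lowering the coordinates of `x t` one agent `j` at a time: forward
consistency handles `j ∈ α (x t)`; otherwise backward consistency applies to the
`k`-connection obtained by chasing the run (the path `s ↦ min u (x s)`) until `j` compromises.
Chasing the run from any `u ≥ y` then shows that `y` is the only feasible allocation above `y`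
and that no compromiser at such a `u` holds her object in `y`. After a deviation by `i` that
does not hurt her, every other agent stays weakly above `y` along the new run (reaching her
`y`-object as a compromiser would contradict the last fact, via backward consistency along the
new run), so the new outcome is feasible and above `y`, hence equal to `y`.
-/

section

variable {N O : Type}

theorem wPref_iff_le {pi : LinearOrder O} {a b : O} : wPref pi a b ↔ pi.le b a := by
  let _ := pi
  rw [wPref, le_iff_eq_or_lt, eq_comm]

abbrev promote (c : O) (pi : LinearOrder O) : LinearOrder O :=
  letI := pi
  LinearOrder.lift' (fun a => if a = c then ⊤ else WithTop.some a) fun a b h => by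
    by_cases ha : a = c <;> by_cases hb : b = c <;> simp_all

theorem promote_lt_self {pi : LinearOrder O} {b c : O} (hb : b ≠ c) : (promote c pi).lt b c := by
  let _ := pi
  show (if b = c then ⊤ else WithTop.some b) < (if c = c then ⊤ else WithTop.some c)
  simp [hb]

theorem promote_lt_of_lt {pi : LinearOrder O} {a b c : O} (hab : pi.lt a b) (ha : a ≠ c) :
    (promote c pi).lt a b := by
  by_cases hb : b = c
  · subst hb
    exact promote_lt_self ha
  let _ := pi
  show (if a = c then ⊤ else WithTop.some a) < (if b = c then ⊤ else WithTop.some b)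
  simpa [ha, hb] using hab

theorem GSP.of_maskinMono {f : (N → LinearOrder O) → N → O} (hf : MaskinMono f) : GSP f := by
  rintro p p' M - hout ⟨hweak, k, -, hk⟩
  -- promoting `f p' j` to the top for every `j ∈ M` keeps both `f p'` and `f p`
  let p'' : N → LinearOrder O := fun j => if j ∈ M then promote (f p' j) (p j) else p j
  have hp' : f p'' = f p' := hf p' p'' fun i b hb => by
    by_cases hi : i ∈ M
    · rw [show p'' i = promote (f p' i) (p i) from if_pos hi]
      let _ := p' i
      exact promote_lt_self (ne_of_lt hb)
    · rwa [show p'' i = p' i from (if_neg hi).trans (hout i hi).symm]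
  have hp : f p'' = f p := hf p p'' fun i b hb => by
    by_cases hi : i ∈ M
    · rw [show p'' i = promote (f p' i) (p i) from if_pos hi]
      let _ := p i
      exact promote_lt_of_lt hb (ne_of_lt (lt_of_lt_of_le hb (wPref_iff_le.1 (hweak i hi))))
    · rwa [show p'' i = p i from if_neg hi]
  let _ := p k
  exact lt_irrefl _ ((hp'.symm.trans hp ▸ hk : sPref (p k) (f p k) (f p k)))

theorem MaskinMono.of_stratProof_nonbossy [Finite N] {f : (N → LinearOrder O) → N → O}
    (hsp : StratProof f) (hnb : Nonbossy f) : MaskinMono f := by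
  have hdev : ∀ p p' i, (∀ j, j ≠ i → p' j = p j) → (p i).le (f p i) (f p' i) →
      f p' = f p := by
    intro p p' i hp hle
    rcases wPref_iff_le.2 hle with h | h
    · exact hnb p p' i hp h
    · exact absurd h (hsp p p' i hp)
  intro p p' hmono
  have := Fintype.ofFinite N
  let mix (s : Finset N) : N → LinearOrder O := fun j => if j ∈ s then p' j else p j
  suffices ∀ s, f (mix s) = f p by simpa [mix] using this Finset.univ
  intro s
  induction s using Finset.induction_on with
  | empty => simp [mix]
  | insert a s ha ih =>
    have hmix : ∀ j, j ≠ a → mix (insert a s) j = mix s j := fun j hj => by simp [mix, hj]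
    rw [← ih]
    by_cases hlt : (p a).lt (f (mix (insert a s)) a) (f (mix s) a)
    · refine (hdev _ _ a (fun j hj => (hmix j hj).symm) ?_).symm
      rw [show mix (insert a s) a = p' a from if_pos (Finset.mem_insert_self a s)]
      rw [ih] at hlt ⊢
      let _ := p' a
      exact (hmono a _ hlt).le
    · refine hdev _ _ a hmix ?_
      rw [show mix s a = p a from if_neg ha]
      let _ := p a
      exact le_of_not_gt hlt

def AllocLE (p : N → LinearOrder O) (u v : N → O) : Prop := ∀ o, (p o).le (u o) (v o)

def allocMin (p : N → LinearOrder O) (u v : N → O) : N → O := fun o => (p o).min (u o) (v o)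

section AllocOrder

variable {p : N → LinearOrder O} {u v w : N → O}

theorem AllocLE.refl (p : N → LinearOrder O) (u : N → O) : AllocLE p u u :=
  fun o => (p o).le_refl _

theorem AllocLE.trans (huv : AllocLE p u v) (hvw : AllocLE p v w) : AllocLE p u w :=
  fun o => (p o).le_trans _ _ _ (huv o) (hvw o)

theorem AllocLE.of_succ {z : ℕ → N → O} {m : ℕ} (h : ∀ l < m, AllocLE p (z (l + 1)) (z l))
    {r s : ℕ} (hrs : r ≤ s) (hs : s ≤ m) : AllocLE p (z s) (z r) := by
  induction s, hrs using Nat.le_induction with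
  | base => exact AllocLE.refl p _
  | succ s _ ih => exact (h s hs).trans (ih (by omega))

theorem allocMin_le_right : AllocLE p (allocMin p u v) v := fun o => by
  let _ := p o
  exact min_le_right _ _

theorem le_allocMin (hwu : AllocLE p w u) (hwv : AllocLE p w v) : AllocLE p w (allocMin p u v) :=
  fun o => by
    let _ := p o
    exact le_min (hwu o) (hwv o)

theorem allocMin_eq_left (huv : AllocLE p u v) : allocMin p u v = u := funext fun o => by
  let _ := p o
  exact min_eq_left (huv o)

theorem allocMin_eq_right (hvu : AllocLE p v u) : allocMin p u v = v := funext fun o => by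
  let _ := p o
  exact min_eq_right (hvu o)

theorem allocMin_le_allocMin_right (hvw : AllocLE p v w) :
    AllocLE p (allocMin p u v) (allocMin p u w) := fun o => by
  let _ := p o
  exact min_le_min_left _ (hvw o)

theorem AllocLE.update_left {j : N} {c : O} (huw : AllocLE p u w) (hc : (p j).le c (w j)) :
    AllocLE p (Function.update u j c) w := fun o => by
  by_cases hoj : o = j
  · subst hoj
    simpa using hc
  · simpa [hoj] using huw o

theorem AllocLE.update_right {j : N} {c : O} (hwu : AllocLE p w u) (hc : (p j).le (w j) c) :
    AllocLE p w (Function.update u j c) := fun o => by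
  by_cases hoj : o = j
  · subst hoj
    simpa using hc
  · simpa [hoj] using hwu o

end AllocOrder

theorem diffSet_comm (x y : N → O) : diffSet x y = diffSet y x :=
  Set.ext fun _ => ne_comm

theorem diffSet_update_subset (x : N → O) (i : N) (c : O) :
    diffSet x (Function.update x i c) ⊆ {i} := fun o ho => by
  by_contra hoi
  exact ho (Function.update_of_ne hoi c x).symm

theorem diffSet_update {x : N → O} {i : N} {c : O} (hc : c ≠ x i) :
    diffSet x (Function.update x i c) = {i} := by
  refine (diffSet_update_subset x i c).antisymm ?_
  rintro o rfl
  simpa [diffSet] using hc.symm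

theorem IsLCA.infeasible_of_mem {C : Set (N → O)} {α : (N → O) → Set N} (hlca : IsLCA C α)
    {u : N → O} {i : N} (hi : i ∈ α u) : u ∉ C :=
  fun hu => by simp [(hlca u).2 hu] at hi

theorem acyclicSeq_of_antitone (q : N → LinearOrder O) {z : ℕ → N → O} {m : ℕ}
    (h : ∀ l < m, AllocLE q (z (l + 1)) (z l)) : AcyclicSeq z m := by
  intro i r s t hrs hst htm hrt
  have hts := AllocLE.of_succ h hst.le htm i
  have hsr := AllocLE.of_succ h hrs.le (hst.le.trans htm) i
  exact (q i).le_antisymm _ _ hsr (hrt ▸ hts)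

noncomputable def splitFirst (g : ℕ → N → O) (k : N) : ℕ → N → O
  | 0 => g 0
  | 1 => Function.update (g 0) k (g 1 k)
  | n + 2 => g (n + 1)

theorem splitFirst_succ {g : ℕ → N → O} {k : N} {n : ℕ} (hn : 0 < n) :
    splitFirst g k (n + 1) = g n := by
  obtain ⟨n, rfl⟩ := Nat.exists_eq_add_of_lt hn
  rfl

/-- `IConn` asks the first step to move `k` alone; splitting off `k`'s move from the first step
of an `α`-path yields such a connection, by forward consistency. -/
theorem iConn_splitFirst {α : (N → O) → Set N} (hfc : ForwardCons α) (q : N → LinearOrder O)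
    {g : ℕ → N → O} {L : ℕ} (hL : 0 < L)
    (hstep : ∀ l < L, diffSet (g l) (g (l + 1)) ⊆ α (g l))
    (hanti : ∀ l < L, AllocLE q (g (l + 1)) (g l)) {k : N} (hk : g 1 k ≠ g 0 k)
    {n : ℕ} (hn : 1 ≤ n) (hnL : n ≤ L + 1) : IConn α k (g 0) (splitFirst g k n) := by
  have hk0 : k ∈ α (g 0) := hstep 0 hL (Ne.symm hk)
  have hd01 : diffSet (g 0) (splitFirst g k 1) = {k} := diffSet_update hk
  refine ⟨n, hn, splitFirst g k, rfl, rfl, acyclicSeq_of_antitone q fun l hl => ?_, hd01,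
    fun l hl => ?_⟩
  · rcases l with _ | _ | l
    · intro o
      by_cases ho : o = k
      · subst ho
        simpa [splitFirst] using hanti 0 hL o
      · simp [splitFirst, ho]
    · intro o
      by_cases ho : o = k
      · subst ho
        simp [splitFirst]
      · simpa [splitFirst, ho] using hanti 0 hL o
    · exact hanti (l + 1) (by omega)
  · rcases l with _ | _ | l
    · show diffSet (g 0) (splitFirst g k 1) ⊆ α (g 0)
      rw [hd01]
      simpa using hk0
    · intro o ho
      have hok : o ≠ k := by
        rintro rfl
        simp [diffSet, splitFirst] at ho
      have ho0 : o ∈ α (g 0) := hstep 0 hL (by simpa [diffSet, splitFirst, hok] using ho)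
      exact hfc _ _ (by rw [hd01]; simpa using hk0) ⟨ho0, by rw [hd01]; exact hok⟩
    · exact hstep (l + 1) (by omega)

theorem bestLC_lt [Fintype O] {pi : LinearOrder O} {a : O} (h : (LCfin pi a).Nonempty) :
    pi.lt (bestLC pi a) a := by
  let _ := pi
  have hmem : bestLC pi a ∈ LCfin pi a := by
    rw [bestLC, dif_pos h]
    exact Finset.max'_mem _ _
  exact (Finset.mem_filter.mp hmem).2

theorem le_bestLC [Fintype O] {pi : LinearOrder O} {a b : O} (h : (LCfin pi a).Nonempty)
    (hb : pi.lt b a) : pi.le b (bestLC pi a) := by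
  let _ := pi
  rw [bestLC, dif_pos h]
  exact Finset.le_max' _ b (Finset.mem_filter.mpr ⟨Finset.mem_univ b, hb⟩)

theorem le_topObj [Fintype O] [Nonempty O] (pi : LinearOrder O) (a : O) :
    pi.le a (topObj pi) := by
  let _ := pi
  exact Finset.le_max' _ a (Finset.mem_univ a)

structure LPRun [Fintype O] [Nonempty O] (C : Set (N → O)) (α : (N → O) → Set N)
    (p : N → LinearOrder O) where
  m : ℕ
  x : ℕ → N → O
  start : x 0 = tau1 p
  infeasible : ∀ t < m, x t ∉ C
  noFail : ∀ t < m, lpNoFail α p (x t)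
  step : ∀ t < m, x (t + 1) = lpStep α p (x t)
  feasible : x m ∈ C

variable [Fintype O] [Nonempty O] {C : Set (N → O)} {α : (N → O) → Set N}
  {p p' : N → LinearOrder O}

theorem exists_run_of_implementable (himp : lpImplementable C α) (p : N → LinearOrder O) :
    ∃ R : LPRun C α p, R.x R.m = LPmech C α p := by
  have h := himp p
  rw [LPmech, dif_pos h]
  obtain ⟨m, x, h0, hrun, hm, hmem⟩ := h.choose_spec
  exact ⟨⟨m, x, h0, fun t ht => (hrun t ht).1, fun t ht => (hrun t ht).2.1,
    fun t ht => (hrun t ht).2.2, hm ▸ hmem⟩, hm⟩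

namespace LPRun

variable (R : LPRun C α p)

theorem step_of_not_mem {t : ℕ} (ht : t < R.m) {i : N} (hi : i ∉ α (R.x t)) :
    R.x (t + 1) i = R.x t i := by
  simp [R.step t ht, lpStep, hi]

theorem step_lt {t : ℕ} (ht : t < R.m) {i : N} (hi : i ∈ α (R.x t)) :
    (p i).lt (R.x (t + 1) i) (R.x t i) := by
  rw [R.step t ht]
  simpa [lpStep, hi] using bestLC_lt (R.noFail t ht i hi)

theorem le_step_of_lt {t : ℕ} (ht : t < R.m) {i : N} (hi : i ∈ α (R.x t)) {b : O}
    (hb : (p i).lt b (R.x t i)) : (p i).le b (R.x (t + 1) i) := by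
  rw [R.step t ht]
  simpa [lpStep, hi] using le_bestLC (R.noFail t ht i hi) hb

theorem step_le {t : ℕ} (ht : t < R.m) : AllocLE p (R.x (t + 1)) (R.x t) := fun i => by
  by_cases hi : i ∈ α (R.x t)
  · let _ := p i
    exact (R.step_lt ht hi).le
  · rw [R.step_of_not_mem ht hi]
    exact (p i).le_refl _

theorem antitone {s t : ℕ} (hst : s ≤ t) (ht : t ≤ R.m) : AllocLE p (R.x t) (R.x s) :=
  AllocLE.of_succ (fun _ hl => R.step_le hl) hst ht

theorem le_start (u : N → O) : AllocLE p u (R.x 0) := fun o => by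
  rw [R.start]
  exact le_topObj _ _

theorem diffSet_step {t : ℕ} (ht : t < R.m) : diffSet (R.x t) (R.x (t + 1)) = α (R.x t) := by
  ext i
  by_cases hi : i ∈ α (R.x t)
  · let _ := p i
    simpa [hi, diffSet] using (R.step_lt ht hi).ne'
  · simp [hi, diffSet, R.step_of_not_mem ht hi]

theorem alpha_final (hlca : IsLCA C α) : α (R.x R.m) = ∅ :=
  (hlca _).2 R.feasible

theorem lt_of_mem_alpha (hlca : IsLCA C α) {t : ℕ} (ht : t ≤ R.m) {i : N}
    (hi : i ∈ α (R.x t)) : t < R.m :=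
  ht.lt_of_ne fun h => by simp [h, R.alpha_final hlca] at hi

theorem exists_move {t : ℕ} (ht : t ≤ R.m) {i : N} (hi : R.x t i ≠ R.x R.m i) :
    ∃ s, t ≤ s ∧ s < R.m ∧ R.x s i = R.x t i ∧ i ∈ α (R.x s) := by
  by_contra! hstay
  suffices ∀ s, t ≤ s → s ≤ R.m → R.x s i = R.x t i from hi (this R.m ht le_rfl).symm
  intro s hts
  induction s, hts using Nat.le_induction with
  | base => exact fun _ => rfl
  | succ s hts ih =>
    intro hs
    have hs' : s ≤ R.m := Nat.le_of_succ_le hs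
    rw [R.step_of_not_mem hs (hstay s hts hs (ih hs')), ih hs']

def InheritsCompromisers (t : ℕ) (u : N → O) : Prop :=
  ∀ k ∈ α (R.x t), u k = R.x t k → k ∈ α u

theorem diffSet_chase_subset_of_inherits {u : N → O} {s : ℕ} (hs : s < R.m)
    (hinh : R.InheritsCompromisers s (allocMin p u (R.x s))) :
    diffSet (allocMin p u (R.x s)) (allocMin p u (R.x (s + 1))) ⊆ α (allocMin p u (R.x s)) := by
  intro o ho
  by_contra hno
  apply ho
  by_cases hoα : o ∈ α (R.x s)
  · let _ := p o
    have hlt : (p o).lt (u o) (R.x s o) :=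
      lt_of_not_ge fun h => hno (hinh o hoα (min_eq_right h))
    show min (u o) (R.x s o) = min (u o) (R.x (s + 1) o)
    rw [min_eq_left hlt.le, min_eq_left (R.le_step_of_lt hs hoα hlt)]
  · simp only [allocMin, R.step_of_not_mem hs hoα]

/-- `j` holds `R.x t j` until some step `s > t` at which she compromises; chasing the run from
`v` up to `s`, with `k`'s move split off first, is the `k`-connection. -/
theorem exists_iConn_of_not_mem (hfc : ForwardCons α) {t : ℕ} (ht : t < R.m)
    (hlater : ∀ s, t < s → s ≤ R.m → ∀ u,
      AllocLE p (R.x R.m) u → AllocLE p u (R.x s) → R.InheritsCompromisers s u)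
    {v : N → O} (hyv : AllocLE p (R.x R.m) v) (hvx : AllocLE p v (R.x t))
    (hv : R.InheritsCompromisers t v) {k : N} (hk : k ∈ α (R.x t)) (hvk : v k = R.x t k)
    {j : N} (hj : j ∉ α (R.x t)) (hvj : v j = R.x t j) (hyj : R.x R.m j ≠ R.x t j) :
    ∃ w, j ∈ α w ∧ IConn α k v w := by
  obtain ⟨s, hts, hsm, hxs, hjs⟩ := R.exists_move ht.le (Ne.symm hyj)
  have hts' : t < s := hts.lt_of_ne (by rintro rfl; exact hj hjs)
  let g : ℕ → N → O := fun l => allocMin p v (R.x (t + l))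
  have hg0 : g 0 = v := allocMin_eq_left hvx
  have hgs : g (s - t) = allocMin p v (R.x s) := by simp only [g, Nat.add_sub_cancel' hts]
  have hinh : ∀ l, t + l ≤ R.m → R.InheritsCompromisers (t + l) (g l) := by
    rintro (_ | l) hl
    · rw [hg0]
      exact hv
    · exact hlater _ (by omega) hl _ (le_allocMin hyv (R.antitone hl le_rfl)) allocMin_le_right
  refine ⟨g (s - t), ?_, ?_⟩
  · refine hinh (s - t) (by omega) j (by rwa [Nat.add_sub_cancel' hts]) ?_
    rw [Nat.add_sub_cancel' hts, hgs]
    let _ := p j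
    show min (v j) (R.x s j) = R.x s j
    rw [hvj, hxs, min_self]
  · have hk1 : g 1 k ≠ g 0 k := by
      rw [hg0, hvk]
      let _ := p k
      show min (v k) (R.x (t + 1) k) ≠ R.x t k
      rw [min_eq_right (hvk ▸ (R.step_lt ht hk).le)]
      exact (R.step_lt ht hk).ne
    have hconn := iConn_splitFirst hfc p (g := g) (L := s - t) (by omega)
      (fun l hl => R.diffSet_chase_subset_of_inherits (s := t + l) (by omega) (hinh l (by omega)))
      (fun l hl => allocMin_le_allocMin_right (R.step_le (t := t + l) (by omega))) hk1
      le_add_self le_rfl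
    rwa [splitFirst_succ (by omega), hg0] at hconn

theorem exists_iConn_of_mem (hfc : ForwardCons α) {s r : ℕ} (hsr : s ≤ r) (hrm : r < R.m)
    {i : N} (hir : i ∈ α (R.x r)) {j : N} (hji : j ≠ i) (hj : j ∈ α (R.x s)) :
    ∃ w, i ∈ α w ∧ IConn α j (R.x s) w := by
  let g : ℕ → N → O := fun l => R.x (s + l)
  have hk : g 1 j ≠ g 0 j := by
    let _ := p j
    exact (R.step_lt (by omega) hj).ne
  have hconn : ∀ n, 1 ≤ n → n ≤ r - s + 2 → IConn α j (R.x s) (splitFirst g j n) :=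
    fun n hn hnL => iConn_splitFirst hfc p (g := g) (L := r - s + 1) (by omega)
      (fun l _ => (R.diffSet_step (t := s + l) (by omega)).subset)
      (fun l _ => R.step_le (t := s + l) (by omega)) hk hn hnL
  rcases hsr.eq_or_lt with rfl | hsr
  · refine ⟨splitFirst g j 1, ?_, hconn 1 le_rfl (by omega)⟩
    have hd : diffSet (R.x s) (splitFirst g j 1) = {j} := diffSet_update hk
    exact hfc _ _ (by rw [hd]; simpa using hj) ⟨hir, by rw [hd]; exact hji.symm⟩
  · refine ⟨R.x r, hir, ?_⟩
    have := hconn (r - s + 1) (by omega) (by omega)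
    rwa [splitFirst_succ (by omega), show g (r - s) = R.x r from congrArg R.x (by omega)] at this

theorem inheritsCompromisers_of_update (hlca : IsLCA C α) (hfc : ForwardCons α)
    (hbc : BackCons C α) {t : ℕ} (ht : t ≤ R.m)
    (hlater : ∀ s, t < s → s ≤ R.m → ∀ u,
      AllocLE p (R.x R.m) u → AllocLE p u (R.x s) → R.InheritsCompromisers s u)
    {u : N → O} (hyu : AllocLE p (R.x R.m) u) (hux : AllocLE p u (R.x t)) {j : N}
    (hv : R.InheritsCompromisers t (Function.update u j (R.x t j))) :
    R.InheritsCompromisers t u := by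
  intro k hk huk
  by_cases huj : u j = R.x t j
  · rw [← huj, Function.update_eq_self] at hv
    exact hv k hk huk
  let v := Function.update u j (R.x t j)
  have hkj : k ≠ j := by
    rintro rfl
    exact huj huk
  have hkv : k ∈ α v := hv k hk (by simpa [v, hkj] using huk)
  have hvu : diffSet v u ⊆ {j} := by
    rw [diffSet_comm]
    exact diffSet_update_subset u j (R.x t j)
  have hkvu : k ∉ diffSet v u := fun h => hkj (hvu h)
  by_cases hj : j ∈ α (R.x t)
  · have hjv : j ∈ α v := hv j hj (by simp)
    exact hfc v u (hvu.trans (by simpa using hjv)) ⟨hkv, hkvu⟩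
  have hyj : R.x R.m j ≠ R.x t j := fun h => huj ((p j).le_antisymm _ _ (hux j) (h ▸ hyu j))
  obtain ⟨w, hjw, hconn⟩ := R.exists_iConn_of_not_mem hfc (R.lt_of_mem_alpha hlca ht hk) hlater
    (hyu.update_right (R.antitone ht le_rfl j)) (hux.update_left ((p j).le_refl _)) hv hk
    (by simpa [v, hkj] using huk) hj (by simp) hyj
  exact hbc k v w (hlca.infeasible_of_mem hkv) (hlca.infeasible_of_mem hjw) hconn u
    (hvu.trans (by simpa using hjw)) hkvu

variable [Finite N]

theorem inheritsCompromisers (hlca : IsLCA C α) (hfc : ForwardCons α) (hbc : BackCons C α)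
    {t : ℕ} (ht : t ≤ R.m) {u : N → O} (hyu : AllocLE p (R.x R.m) u)
    (hux : AllocLE p u (R.x t)) : R.InheritsCompromisers t u := by
  have := Fintype.ofFinite N
  obtain ⟨d, hd⟩ : ∃ d, R.m - t = d := ⟨_, rfl⟩
  induction d using Nat.strong_induction_on generalizing t u with
  | _ d IH =>
  have hlater : ∀ s, t < s → s ≤ R.m → ∀ u,
      AllocLE p (R.x R.m) u → AllocLE p u (R.x s) → R.InheritsCompromisers s u :=
    fun s hts hs u hyu hux => IH (R.m - s) (by omega) hs hyu hux rfl
  -- move the coordinates of `u` down from `R.x t` one agent at a time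
  suffices ∀ D : Finset N, ∀ u, (∀ o ∉ D, u o = R.x t o) → AllocLE p (R.x R.m) u →
      AllocLE p u (R.x t) → R.InheritsCompromisers t u from
    this Finset.univ u (by simp) hyu hux
  intro D
  induction D using Finset.induction_on with
  | empty =>
    intro u hu _ _
    rw [show u = R.x t from funext fun o => hu o (Finset.notMem_empty o)]
    exact fun k hk _ => hk
  | insert j D _ ih =>
    intro u hu hyu hux
    refine R.inheritsCompromisers_of_update hlca hfc hbc ht hlater hyu hux (j := j)
      (ih _ (fun o ho => ?_) (hyu.update_right (R.antitone ht le_rfl j))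
        (hux.update_left ((p j).le_refl _)))
    by_cases hoj : o = j
    · simp [hoj]
    · simpa [hoj] using hu o (by simp [hoj, ho])

theorem diffSet_chase_subset (hlca : IsLCA C α) (hfc : ForwardCons α) (hbc : BackCons C α)
    {u : N → O} (hyu : AllocLE p (R.x R.m) u) {s : ℕ} (hs : s < R.m) :
    diffSet (allocMin p u (R.x s)) (allocMin p u (R.x (s + 1))) ⊆ α (allocMin p u (R.x s)) :=
  R.diffSet_chase_subset_of_inherits hs (R.inheritsCompromisers hlca hfc hbc hs.le
    (le_allocMin hyu (R.antitone hs.le le_rfl)) allocMin_le_right)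

theorem ne_final_of_mem_alpha (hlca : IsLCA C α) (hfc : ForwardCons α) (hbc : BackCons C α)
    {u : N → O} (hyu : AllocLE p (R.x R.m) u) {j : N} (hj : j ∈ α u) : u j ≠ R.x R.m j := by
  intro hjy
  have hchase : ∀ s ≤ R.m, j ∈ α (allocMin p u (R.x s)) := by
    intro s
    induction s with
    | zero => exact fun _ => (allocMin_eq_left (R.le_start u)).symm ▸ hj
    | succ s ih =>
      intro (hs : s < R.m)
      refine hfc _ _ (R.diffSet_chase_subset hlca hfc hbc hyu hs)
        ⟨ih hs.le, fun hmove => hmove ?_⟩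
      let _ := p j
      show min (u j) (R.x s j) = min (u j) (R.x (s + 1) j)
      rw [hjy, min_eq_left (R.antitone hs.le le_rfl j), min_eq_left (R.antitone hs le_rfl j)]
  have := hchase R.m le_rfl
  rw [allocMin_eq_right hyu, R.alpha_final hlca] at this
  exact this

theorem eq_final_of_mem (hlca : IsLCA C α) (hfc : ForwardCons α) (hbc : BackCons C α)
    {u : N → O} (hyu : AllocLE p (R.x R.m) u) (hu : u ∈ C) : u = R.x R.m := by
  have hchase : ∀ s ≤ R.m, allocMin p u (R.x s) = u := by
    intro s
    induction s with
    | zero => exact fun _ => allocMin_eq_left (R.le_start u)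
    | succ s ih =>
      intro (hs : s < R.m)
      have hsub := R.diffSet_chase_subset hlca hfc hbc hyu hs
      rw [ih hs.le, (hlca u).2 hu] at hsub
      exact funext fun o => by_contra fun h => hsub (Ne.symm h)
  rw [← hchase R.m le_rfl, allocMin_eq_right hyu]

/-- Were `R'.x s j` her `p`-outcome, backward consistency along the run for `p'` up to a step
where `i` compromises would make `j` a compromiser at `R'.x s` with `i` moved to her
`p`-outcome, an allocation weakly `p`-above the `p`-outcome. -/
theorem ne_final_of_deviation (hlca : IsLCA C α) (hfc : ForwardCons α) (hbc : BackCons C α)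
    (R' : LPRun C α p') {i : N} (hi : (p i).le (R.x R.m i) (R'.x R'.m i))
    {s : ℕ} (hs : s < R'.m) (habove : ∀ o, o ≠ i → (p o).le (R.x R.m o) (R'.x s o))
    {j : N} (hji : j ≠ i) (hj : j ∈ α (R'.x s)) : R'.x s j ≠ R.x R.m j := by
  intro hjy
  by_cases hfin : R'.x s i = R'.x R'.m i
  · refine R.ne_final_of_mem_alpha hlca hfc hbc (u := R'.x s) (fun o => ?_) hj hjy
    by_cases hoi : o = i
    · subst hoi
      rw [hfin]
      exact hi
    · exact habove o hoi
  obtain ⟨r, hsr, hrm, -, hir⟩ := R'.exists_move hs.le hfin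
  obtain ⟨w, hiw, hconn⟩ := R'.exists_iConn_of_mem hfc hsr hrm hir hji hj
  let v := Function.update (R'.x s) i (R.x R.m i)
  have hdv : diffSet (R'.x s) v ⊆ {i} := diffSet_update_subset _ _ _
  have hjv : j ∈ α v := hbc j (R'.x s) w (R'.infeasible s hs) (hlca.infeasible_of_mem hiw)
    hconn v (hdv.trans (by simpa using hiw)) fun h => hji (hdv h)
  refine R.ne_final_of_mem_alpha hlca hfc hbc (u := v) (fun o => ?_) hjv
    (by simpa [v, hji] using hjy)
  by_cases hoi : o = i
  · subst hoi
    simp [v]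
  · simpa [v, hoi] using habove o hoi

theorem final_eq_of_deviation (hlca : IsLCA C α) (hfc : ForwardCons α) (hbc : BackCons C α)
    (R' : LPRun C α p') {i : N} (hp : ∀ j, j ≠ i → p' j = p j)
    (hi : (p i).le (R.x R.m i) (R'.x R'.m i)) : R'.x R'.m = R.x R.m := by
  have habove : ∀ s ≤ R'.m, ∀ o, o ≠ i → (p o).le (R.x R.m o) (R'.x s o) := by
    intro s
    induction s with
    | zero =>
      intro _ o hoi
      rw [R'.start, tau1, hp o hoi]
      exact le_topObj _ _
    | succ s ih =>
      intro (hs : s < R'.m) o hoi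
      by_cases ho : o ∈ α (R'.x s)
      · have hne := R.ne_final_of_deviation hlca hfc hbc R' hi hs (ih hs.le) hoi ho
        have hlt : (p' o).lt (R.x R.m o) (R'.x s o) := by
          rw [hp o hoi]
          let _ := p o
          exact lt_of_le_of_ne (ih hs.le o hoi) (Ne.symm hne)
        have hstep := R'.le_step_of_lt hs ho hlt
        rwa [hp o hoi] at hstep
      · rw [R'.step_of_not_mem hs ho]
        exact ih hs.le o hoi
  refine R.eq_final_of_mem hlca hfc hbc (fun o => ?_) R'.feasible
  by_cases hoi : o = i
  · subst hoi
    exact hi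
  · exact habove R'.m le_rfl o hoi

end LPRun

section Mechanism

variable [Finite N]

theorem LPmech_eq_of_deviation (hlca : IsLCA C α) (hfc : ForwardCons α) (hbc : BackCons C α)
    (himp : lpImplementable C α) {i : N} (hp : ∀ j, j ≠ i → p' j = p j)
    (hi : (p i).le (LPmech C α p i) (LPmech C α p' i)) : LPmech C α p' = LPmech C α p := by
  obtain ⟨R, hR⟩ := exists_run_of_implementable himp p
  obtain ⟨R', hR'⟩ := exists_run_of_implementable himp p'
  rw [← hR, ← hR'] at hi ⊢
  exact R.final_eq_of_deviation hlca hfc hbc R' hp hi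

theorem LPmech_stratProof (hlca : IsLCA C α) (hfc : ForwardCons α) (hbc : BackCons C α)
    (himp : lpImplementable C α) : StratProof (LPmech C α) := by
  intro p p' i hp hlt
  let _ := p i
  have := LPmech_eq_of_deviation hlca hfc hbc himp hp hlt.le
  rw [this] at hlt
  exact lt_irrefl _ hlt

theorem LPmech_nonbossy (hlca : IsLCA C α) (hfc : ForwardCons α) (hbc : BackCons C α)
    (himp : lpImplementable C α) : Nonbossy (LPmech C α) :=
  fun p _ i hp heq => LPmech_eq_of_deviation hlca hfc hbc himp hp (heq ▸ (p i).le_refl _)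

end Mechanism

end

theorem consistent_implies_gsp_general
    {N O : Type} [Fintype N] [Fintype O] [Nonempty O]
    (C : Set (N → O))
    (α : (N → O) → Set N) (hlca : IsLCA C α)
    (himp : lpImplementable C α)
    (hfc : ForwardCons α) (hbc : BackCons C α) :
    GSP (LPmech C α) := by
  exact GSP.of_maskinMono (MaskinMono.of_stratProof_nonbossy
    (LPmech_stratProof hlca hfc hbc himp) (LPmech_nonbossy hlca hfc hbc himp))

/-- Theorem 1: if `α` is an implementable and consistent (forward and
backward consistent) local compromiser assignment for `C`, then `LP_α` is group
strategy-proof. -/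
theorem consistent_implies_gsp
    {N O : Type} [Fintype N] [Fintype O] [Nonempty O]
    (C : Set (N → O)) (hC : C.Nonempty)
    (α : (N → O) → Set N) (hlca : IsLCA C α)
    (himp : lpImplementable C α)
    (hfc : ForwardCons α) (hbc : BackCons C α) :
    GSP (LPmech C α) :=
  consistent_implies_gsp_general C α hlca himp hfc hbc
end

section
/- For any mechanism f : 𝒫 → A mapping preference profiles to allocations, the following are equivalent: (1) f is group strategy-proof; (2) f is strategy-proof and nonbossy; (3) f is Maskin monotonic. -/
/- Common framework: constrained allocation, local priority mechanisms
   (Root & Ahn, "Local Priority Mechanisms"). Agents `N`, objects `O`.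
   A strict preference is encoded as a `LinearOrder` on `O`, where
   `pi.lt b a` means `a` is strictly preferred to `b`. -/

open Classical

/-- The ranking `pi` with `c` moved to the top; the order among the other objects is kept. -/
abbrev moveTop {O : Type} (pi : LinearOrder O) (c : O) : LinearOrder O :=
  letI := pi
  LinearOrder.lift' (fun a => toLex (decide (a = c), a))
    fun _ _ h => congrArg Prod.snd (toLex.injective h)

section MoveTop

variable {O : Type} (pi : LinearOrder O) {a b c : O}

theorem moveTop_lt_iff :
    (moveTop pi c).lt a b ↔
      letI := pi; toLex (decide (a = c), a) < toLex (decide (b = c), b) :=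
  Iff.rfl

theorem moveTop_lt_top (hb : b ≠ c) : (moveTop pi c).lt b c := by
  let _ := pi
  rw [moveTop_lt_iff, Prod.Lex.toLex_lt_toLex]
  simp [hb]

theorem moveTop_lt_of_lt (hba : pi.lt b a) (hca : wPref pi c a) : (moveTop pi c).lt b a := by
  let _ := pi
  rcases hca with rfl | hac
  · exact moveTop_lt_top pi (ne_of_lt hba)
  · have hbc : b ≠ c := (hba.trans hac).ne
    rw [moveTop_lt_iff, Prod.Lex.toLex_lt_toLex]
    simp [hbc, hac.ne, hba]

end MoveTop

section Mechanism

variable {N O : Type} {f : (N → LinearOrder O) → N → O}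

theorem GSP.stratProof (h : GSP f) : StratProof f := by
  intro p p' i hp hs
  refine h p p' {i} ⟨i, rfl⟩ (fun j hj => hp j hj) ⟨?_, i, rfl, hs⟩
  rintro j rfl
  exact Or.inr hs

theorem GSP.nonbossy (h : GSP f) : Nonbossy f := by
  intro p p' i hp hfi
  by_contra hne
  obtain ⟨j, hj⟩ := Function.ne_iff.mp hne
  have hji : j ≠ i := fun h => hj (h ▸ hfi)
  -- The coalition `{i, j}`: `i` is indifferent, and `j`, whose preference is the same at
  -- `p` and `p'`, strictly gains in one of the two directions.
  have no_gain : ∀ q q' : N → LinearOrder O, (∀ k, k ≠ i → q' k = q k) →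
      f q' i = f q i → ¬ sPref (q j) (f q' j) (f q j) := by
    intro q q' hq hqi hs
    refine h q q' {i, j} ⟨i, Or.inl rfl⟩ (fun k hk => hq k fun hki => hk (Or.inl hki))
      ⟨?_, j, Or.inr rfl, hs⟩
    rintro k (rfl | rfl)
    · exact Or.inl hqi
    · exact Or.inr hs
  let _ := p j
  rcases lt_trichotomy (f p j) (f p' j) with hlt | heq | hgt
  · exact no_gain p p' hp hfi hlt
  · exact hj heq.symm
  · refine no_gain p' p (fun k hk => (hp k hk).symm) hfi.symm ?_
    rw [sPref, hp j hji]
    exact hgt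

/-- Strategy-proofness at `p` and at `p'` forbids the assignment of `i` to move either way. -/
theorem StratProof.apply_eq_of_lowerContour_subset (hsp : StratProof f)
    {p p' : N → LinearOrder O} {i : N} (hp : ∀ j, j ≠ i → p' j = p j)
    (hmono : ∀ b, (p i).lt b (f p i) → (p' i).lt b (f p i)) : f p' i = f p i := by
  let _ := p i
  rcases lt_trichotomy (f p' i) (f p i) with hlt | heq | hgt
  · exact absurd (hmono _ hlt) (hsp p' p i fun j hj => (hp j hj).symm)
  · exact heq
  · exact absurd hgt (hsp p p' i hp)

theorem StratProof.maskinMono [Fintype N] (hsp : StratProof f) (hnb : Nonbossy f) :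
    MaskinMono f := by
  intro p p' hmono
  let q : Finset N → N → LinearOrder O := fun S j => if j ∈ S then p' j else p j
  have hq : ∀ S, f (q S) = f p := by
    intro S
    induction S using Finset.induction_on with
    | empty => simp [q]
    | @insert i S hiS ih =>
      have hdiff : ∀ j, j ≠ i → q (insert i S) j = q S j := by
        intro j hj
        simp [q, hj]
      have hi : f (q (insert i S)) i = f (q S) i := by
        refine hsp.apply_eq_of_lowerContour_subset hdiff fun b hb => ?_
        rw [show q S i = p i from if_neg hiS, ih] at hb
        rw [show q (insert i S) i = p' i from if_pos (Finset.mem_insert_self i S), ih]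
        exact hmono i b hb
      rw [hnb _ _ i hdiff hi, ih]
  simpa [q] using hq Finset.univ

/-- Every member of the coalition raises her new assignment to the top of her ranking:
the deviation outcome is then Maskin-preserved from the deviation profile, and, because the
new assignment is weakly better, also from the truthful one. -/
theorem MaskinMono.gsp (hmm : MaskinMono f) : GSP f := by
  rintro p p' M - hout ⟨hweak, k, -, hk⟩
  let r : N → LinearOrder O := fun i => if i ∈ M then moveTop (p i) (f p' i) else p i
  have hr_dev : f r = f p' := by
    refine hmm p' r fun i b hb => ?_
    by_cases hi : i ∈ M
    · rw [show r i = _ from if_pos hi]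
      exact moveTop_lt_top (p i) (letI := p' i; ne_of_lt hb)
    · rwa [show r i = p i from if_neg hi, ← hout i hi]
  have hr_truth : f r = f p := by
    refine hmm p r fun i b hb => ?_
    by_cases hi : i ∈ M
    · rw [show r i = _ from if_pos hi]
      exact moveTop_lt_of_lt (p i) hb (hweak i hi)
    · rwa [show r i = p i from if_neg hi]
  rw [← hr_dev, hr_truth] at hk
  exact (letI := p k; lt_irrefl _ hk)

end Mechanism

theorem gsp_equivalences_general
    {N O : Type} [Fintype N]
    (f : (N → LinearOrder O) → N → O) :
    (GSP f ↔ (StratProof f ∧ Nonbossy f)) ∧ (GSP f ↔ MaskinMono f) := by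
  have sp_nb_of_gsp (h : GSP f) : StratProof f ∧ Nonbossy f := ⟨h.stratProof, h.nonbossy⟩
  have mm_of_sp_nb (h : StratProof f ∧ Nonbossy f) : MaskinMono f := h.1.maskinMono h.2
  exact ⟨⟨sp_nb_of_gsp, fun h => (mm_of_sp_nb h).gsp⟩,
    ⟨fun h => mm_of_sp_nb (sp_nb_of_gsp h), MaskinMono.gsp⟩⟩

/-- Proposition A.1, Root & Ahn: for any mechanism, group
strategy-proofness, (individual strategy-proofness + nonbossiness), and Maskin
monotonicity are equivalent. -/
theorem gsp_equivalences
    {N O : Type} [Fintype N] [Fintype O]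
    (f : (N → LinearOrder O) → N → O) :
    (GSP f ↔ (StratProof f ∧ Nonbossy f)) ∧ (GSP f ↔ MaskinMono f) :=
  gsp_equivalences_general f
end
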